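/- Achievability upper bound: let φ be a pure state with φ ≤ λσ for some σ ∈ F and λ = R_F(φ) > 1, and for ε ∈ (0, (λ−1)/λ] define τ_ε := (1−ε)φ + ε(λσ − φ)/(λ−1). Then τ_ε is a density matrix satisfying ⟨φ|τ_ε|φ⟩ ≥ 1 − ε and Ω_F(τ_ε) ≤ (1−ε)(λ−1)/ε. -/

import Mathlib

open scoped ENNReal ComplexOrder
open Matrix

noncomputable section

variable {ι κ : Type*}

/-- Loewner order: `A ≤ B` iff `B - A` is positive semidefinite. -/
def Loe [Fintype ι] (A B : Matrix ι ι ℂ) : Prop := (B - A).PosSemidef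

/-- The (non-logarithmic) max-relative entropy `Rmax(ρ‖σ) = inf {λ : ρ ≤ λσ}`,
with the convention `inf ∅ = ∞`. -/
noncomputable def Rmax [Fintype ι] (ρ σ : Matrix ι ι ℂ) : ℝ≥0∞ :=
  sInf {x : ℝ≥0∞ | ∃ l : ℝ, 0 ≤ l ∧ x = ENNReal.ofReal l ∧ ((l : ℂ) • σ - ρ).PosSemidef}

/-- A density matrix: positive semidefinite with unit trace. -/
def IsState [Fintype ι] (ρ : Matrix ι ι ℂ) : Prop := ρ.PosSemidef ∧ ρ.trace = 1

/-- The projective robustness `Ω_F(ρ) = inf_{σ∈F} Rmax(ρ‖σ) · Rmax(σ‖ρ)`. -/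
noncomputable def Omega [Fintype ι] (F : Set (Matrix ι ι ℂ)) (ρ : Matrix ι ι ℂ) : ℝ≥0∞ :=
  ⨅ σ ∈ F, Rmax ρ σ * Rmax σ ρ

/-- The cone generated by `F`: `{cσ : c ≥ 0, σ ∈ F}`. -/
def coneF [Fintype ι] (F : Set (Matrix ι ι ℂ)) : Set (Matrix ι ι ℂ) :=
  {X | ∃ c : ℝ, 0 ≤ c ∧ ∃ σ ∈ F, X = (c : ℂ) • σ}

/-- The affine hull of `F` (real affine combinations). -/
def affHull [Fintype ι] (F : Set (Matrix ι ι ℂ)) : Set (Matrix ι ι ℂ) :=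
  {Z | ∃ (k : ℕ) (c : Fin k → ℝ) (σ : Fin k → Matrix ι ι ℂ),
    (∀ i, σ i ∈ F) ∧ (∑ i, c i) = 1 ∧ Z = ∑ i, ((c i : ℂ) • σ i)}

/-- The generalised robustness `R_F(ρ) = inf_{σ∈F} Rmax(ρ‖σ)`. -/
noncomputable def RF [Fintype ι] (F : Set (Matrix ι ι ℂ)) (ρ : Matrix ι ι ℂ) : ℝ≥0∞ :=
  ⨅ σ ∈ F, Rmax ρ σ

/-- The resource weight `W_F(ρ) = (inf_{σ∈F} Rmax(σ‖ρ))⁻¹`. -/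
noncomputable def WF [Fintype ι] (F : Set (Matrix ι ι ℂ)) (ρ : Matrix ι ι ℂ) : ℝ≥0∞ :=
  (⨅ σ ∈ F, Rmax σ ρ)⁻¹

/-! The free state `σ` itself witnesses the bound. With `a = 1 - ε - ε/(λ-1)`, which is
nonnegative exactly when `ε ≤ (λ-1)/λ`, one has `τ_ε = aφ + ελ/(λ-1) σ`, hence
`(1-ε)λσ - τ_ε = a(λσ - φ) ≥ 0` and `(λ-1)/(ελ) τ_ε - σ = a(λ-1)/(ελ) φ ≥ 0`; multiplying the two
max-relative entropy bounds gives `(1-ε)(λ-1)/ε`. The fidelity bound comes from `(1-ε)φ ≤ τ_ε`. -/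

open scoped MatrixOrder

section Loewner

variable [Fintype ι]

lemma ofReal_smul_nonneg {c : ℝ} (hc : 0 ≤ c) {A : Matrix ι ι ℂ} (hA : 0 ≤ A) :
    0 ≤ (c : ℂ) • A :=
  smul_nonneg (by exact_mod_cast hc) hA

lemma re_dotProduct_mulVec_le_of_le {A B : Matrix ι ι ℂ} (h : A ≤ B) (x : ι → ℂ) :
    (star x ⬝ᵥ A *ᵥ x).re ≤ (star x ⬝ᵥ B *ᵥ x).re := by
  have := (Complex.le_def.mp ((le_iff.mp h).dotProduct_mulVec_nonneg x)).1
  simpa [sub_mulVec, dotProduct_sub] using this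

lemma Rmax_le_ofReal {A B : Matrix ι ι ℂ} {l : ℝ} (hl : 0 ≤ l) (h : A ≤ (l : ℂ) • B) :
    Rmax A B ≤ ENNReal.ofReal l :=
  sInf_le ⟨l, hl, rfl, h⟩

lemma Omega_le_ofReal_mul {F : Set (Matrix ι ι ℂ)} {τ σ : Matrix ι ι ℂ} (hσ : σ ∈ F)
    {a b : ℝ} (ha : 0 ≤ a) (hb : 0 ≤ b) (hτσ : τ ≤ (a : ℂ) • σ) (hστ : σ ≤ (b : ℂ) • τ) :
    Omega F τ ≤ ENNReal.ofReal (a * b) := by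
  rw [ENNReal.ofReal_mul ha]
  exact (iInf₂_le σ hσ).trans (mul_le_mul' (Rmax_le_ofReal ha hτσ) (Rmax_le_ofReal hb hστ))

end Loewner

section PureState

variable [Fintype ι] {ψ : ι → ℂ}

lemma isState_vecMulVec_star (hψ : star ψ ⬝ᵥ ψ = 1) : IsState (vecMulVec ψ (star ψ)) :=
  ⟨posSemidef_vecMulVec_self_star ψ, by rw [trace_vecMulVec, dotProduct_comm, hψ]⟩

lemma dotProduct_vecMulVec_star_mulVec (hψ : star ψ ⬝ᵥ ψ = 1) :
    star ψ ⬝ᵥ vecMulVec ψ (star ψ) *ᵥ ψ = 1 := by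
  simp [vecMulVec_mulVec, hψ]

end PureState

def robustMixture [Fintype ι] (lam ε : ℝ) (φ σ : Matrix ι ι ℂ) : Matrix ι ι ℂ :=
  ((1 - ε : ℝ) : ℂ) • φ + ((ε / (lam - 1) : ℝ) : ℂ) • ((lam : ℂ) • σ - φ)

section RobustMixture

variable [Fintype ι] {φ σ : Matrix ι ι ℂ} {lam ε : ℝ}

lemma one_sub_sub_div_nonneg (hlam : 1 < lam) (hεub : ε ≤ (lam - 1) / lam) :
    0 ≤ 1 - ε - ε / (lam - 1) := by
  have h1 : 0 < lam - 1 := by linarith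
  rw [le_div_iff₀ (by linarith)] at hεub
  have h : ε + ε / (lam - 1) = ε * lam / (lam - 1) := by field_simp; ring
  rw [sub_sub, sub_nonneg, h, div_le_one h1]
  exact hεub

lemma isState_robustMixture (hφ : IsState φ) (hσ : IsState σ) (hlam : 1 < lam)
    (hε0 : 0 ≤ ε) (hε1 : ε ≤ 1) (hle : φ ≤ (lam : ℂ) • σ) :
    IsState (robustMixture lam ε φ σ) := by
  refine ⟨(add_nonneg (ofReal_smul_nonneg (by linarith) hφ.1.nonneg)
    (ofReal_smul_nonneg (div_nonneg hε0 (by linarith)) (sub_nonneg.mpr hle))).posSemidef, ?_⟩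
  have h : (1 - ε) * 1 + ε / (lam - 1) * (lam * 1 - 1) = 1 := by
    field_simp [show lam - 1 ≠ 0 by linarith]; ring
  simp only [robustMixture, trace_add, trace_smul, trace_sub, hφ.2, hσ.2, smul_eq_mul]
  exact_mod_cast h

lemma smul_le_robustMixture (hlam : 1 < lam) (hε0 : 0 ≤ ε) (hle : φ ≤ (lam : ℂ) • σ) :
    ((1 - ε : ℝ) : ℂ) • φ ≤ robustMixture lam ε φ σ :=
  le_add_of_nonneg_right (ofReal_smul_nonneg (div_nonneg hε0 (by linarith)) (sub_nonneg.mpr hle))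

lemma robustMixture_le_smul (hlam : 1 < lam) (hεub : ε ≤ (lam - 1) / lam)
    (hle : φ ≤ (lam : ℂ) • σ) :
    robustMixture lam ε φ σ ≤ (((1 - ε) * lam : ℝ) : ℂ) • σ := by
  have hlam1 : lam - 1 ≠ 0 := by linarith
  have key : (((1 - ε) * lam : ℝ) : ℂ) • σ - robustMixture lam ε φ σ =
      ((1 - ε - ε / (lam - 1) : ℝ) : ℂ) • ((lam : ℂ) • σ - φ) := by
    simp only [robustMixture, Complex.coe_smul]
    match_scalars
    · field_simp
    · field_simp; ring
  rw [← sub_nonneg, key]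
  exact ofReal_smul_nonneg (one_sub_sub_div_nonneg hlam hεub) (sub_nonneg.mpr hle)

lemma le_smul_robustMixture (hφ : 0 ≤ φ) (hlam : 1 < lam) (hε0 : 0 < ε)
    (hεub : ε ≤ (lam - 1) / lam) :
    σ ≤ (((lam - 1) / (ε * lam) : ℝ) : ℂ) • robustMixture lam ε φ σ := by
  have hlam1 : lam - 1 ≠ 0 := by linarith
  have hlam0 : lam ≠ 0 := by linarith
  have key : (((lam - 1) / (ε * lam) : ℝ) : ℂ) • robustMixture lam ε φ σ - σ =
      (((lam - 1) / (ε * lam) * (1 - ε - ε / (lam - 1)) : ℝ) : ℂ) • φ := by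
    simp only [robustMixture, Complex.coe_smul]
    match_scalars <;> (field_simp; ring)
  rw [← sub_nonneg, key]
  exact ofReal_smul_nonneg (mul_nonneg (div_nonneg (by linarith) (by positivity))
    (one_sub_sub_div_nonneg hlam hεub)) hφ

end RobustMixture

theorem omega_distillation_achievability_general [Fintype ι]
    (F : Set (Matrix ι ι ℂ))
    (hFstates : ∀ σ ∈ F, IsState σ)
    (ψ : ι → ℂ) (hψ : star ψ ⬝ᵥ ψ = 1)
    (φ : Matrix ι ι ℂ) (hφ : φ = vecMulVec ψ (star ψ))
    (σ : Matrix ι ι ℂ) (hσ : σ ∈ F)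
    (lam : ℝ) (hlam1 : 1 < lam) (hle : Loe φ ((lam : ℂ) • σ))
    (ε : ℝ) (hε0 : 0 < ε) (hεub : ε ≤ (lam - 1) / lam)
    (τ : Matrix ι ι ℂ)
    (hτdef : τ = ((1 - ε : ℝ) : ℂ) • φ + ((ε / (lam - 1) : ℝ) : ℂ) • ((lam : ℂ) • σ - φ)) :
    IsState τ ∧ 1 - ε ≤ (star ψ ⬝ᵥ (τ *ᵥ ψ)).re ∧
      Omega F τ ≤ ENNReal.ofReal ((1 - ε) * (lam - 1) / ε) := by
  change τ = robustMixture lam ε φ σ at hτdef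
  subst hτdef
  have hφstate : IsState φ := hφ ▸ isState_vecMulVec_star hψ
  have hε1 : ε ≤ 1 := hεub.trans (div_le_one_of_le₀ (by linarith) (by linarith))
  refine ⟨isState_robustMixture hφstate (hFstates σ hσ) hlam1 hε0.le hε1 hle, ?_, ?_⟩
  · calc 1 - ε = (star ψ ⬝ᵥ (((1 - ε : ℝ) : ℂ) • φ) *ᵥ ψ).re := by
          simp [smul_mulVec, hφ, dotProduct_vecMulVec_star_mulVec hψ]
      _ ≤ _ := re_dotProduct_mulVec_le_of_le (smul_le_robustMixture hlam1 hε0.le hle) ψ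
  · have hprod : (1 - ε) * lam * ((lam - 1) / (ε * lam)) = (1 - ε) * (lam - 1) / ε := by
      field_simp [show lam ≠ 0 by linarith]
    rw [← hprod]
    exact Omega_le_ofReal_mul hσ (by nlinarith) (by positivity)
      (robustMixture_le_smul hlam1 hεub hle)
      (le_smul_robustMixture hφstate.1.nonneg hlam1 hε0 hεub)

/-- Achievability: for a pure state `φ = |ψ⟩⟨ψ|` with `φ ≤ λσ`, `σ ∈ F`,
`λ = R_F(φ) > 1`, and `ε ∈ (0, (λ-1)/λ]`, the state
`τ_ε = (1-ε)φ + ε(λσ - φ)/(λ-1)` is a density matrix with `⟨φ|τ_ε|φ⟩ ≥ 1-ε` and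
`Ω_F(τ_ε) ≤ (1-ε)(λ-1)/ε`. -/
theorem omega_distillation_achievability [Fintype ι]
    (F : Set (Matrix ι ι ℂ)) (hF : IsClosed F) (hconv : Convex ℝ F)
    (hFstates : ∀ σ ∈ F, IsState σ)
    (ψ : ι → ℂ) (hψ : star ψ ⬝ᵥ ψ = 1)
    (φ : Matrix ι ι ℂ) (hφ : φ = vecMulVec ψ (star ψ))
    (σ : Matrix ι ι ℂ) (hσ : σ ∈ F)
    (lam : ℝ) (hlam1 : 1 < lam) (hle : Loe φ ((lam : ℂ) • σ))
    (hRF : RF F φ = ENNReal.ofReal lam)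
    (ε : ℝ) (hε0 : 0 < ε) (hεub : ε ≤ (lam - 1) / lam)
    (τ : Matrix ι ι ℂ)
    (hτdef : τ = ((1 - ε : ℝ) : ℂ) • φ + ((ε / (lam - 1) : ℝ) : ℂ) • ((lam : ℂ) • σ - φ)) :
    IsState τ ∧ 1 - ε ≤ (star ψ ⬝ᵥ (τ *ᵥ ψ)).re ∧
      Omega F τ ≤ ENNReal.ofReal ((1 - ε) * (lam - 1) / ε) :=
  omega_distillation_achievability_general F hFstates ψ hψ φ hφ σ hσ lam hlam1 hle ε hε0 hεub τ
    hτdef
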